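/- In the exact completion C_ex of a weakly lex Pos-enriched category C, every congruence is effective: any congruence ([h₀],[h₁]) : (X,R) ⇉ (Y,S) is the kernel congruence of the coinserter [1_Y] : (Y,S) → (Y,S'), where S' is constructed as a suitable weak limit in C from S, h₀, h₁. -/

import Mathlib

open CategoryTheory

universe w v u v' u' v'' u''

/-- A `Pos`-enriched category: each hom-set carries a partial order and
composition is monotone in both variables. -/
class PosEnriched (C : Type u) [Category.{v} C] where
  homOrder : ∀ X Y : C, PartialOrder (X ⟶ Y)
  comp_mono : ∀ {X Y Z : C} {f f' : X ⟶ Y} {g g' : Y ⟶ Z},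
    (homOrder X Y).le f f' → (homOrder Y Z).le g g' → (homOrder X Z).le (f ≫ g) (f' ≫ g')

attribute [instance] PosEnriched.homOrder

namespace PosEnr

variable {C : Type u} [Category.{v} C] [PosEnriched C]

theorem comp_mono' {X Y Z : C} {f f' : X ⟶ Y} {g g' : Y ⟶ Z} (h : f ≤ f') (h' : g ≤ g') :
    f ≫ g ≤ f' ≫ g' := PosEnriched.comp_mono h h'

/-- `m` is an order-monomorphism (ff-morphism): postcomposition reflects the order
(hence, by antisymmetry, is also injective). -/
def OrderMono {X Y : C} (m : X ⟶ Y) : Prop :=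
  ∀ {Z : C} (u v : Z ⟶ X), u ≫ m ≤ v ≫ m → u ≤ v

/-- `e` is an so-morphism: it is left orthogonal, in the `Pos`-enriched sense, to all
order-monomorphisms (the relevant square of hom-posets is a pullback in `Pos`). -/
def IsSo {A B : C} (e : A ⟶ B) : Prop :=
  ∀ {X Y : C} (m : X ⟶ Y), OrderMono m →
    (∀ (f : A ⟶ X) (g : B ⟶ Y), f ≫ m = e ≫ g → ∃ h : B ⟶ X, e ≫ h = f ∧ h ≫ m = g) ∧
    (∀ h h' : B ⟶ X, e ≫ h ≤ e ≫ h' → h ≫ m ≤ h' ≫ m → h ≤ h')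

/-- `e : I ⟶ X` is the (conical, `Pos`-enriched) inserter of the ordered pair `(f, g)`. -/
def IsInserterP {X Y I : C} (f g : X ⟶ Y) (e : I ⟶ X) : Prop :=
  e ≫ f ≤ e ≫ g ∧
  (∀ {Z : C} (h : Z ⟶ X), h ≫ f ≤ h ≫ g → ∃ u : Z ⟶ I, u ≫ e = h) ∧
  OrderMono e

/-- A weak inserter: only the existence part of the universal property. -/
def IsWeakInserter {X Y I : C} (f g : X ⟶ Y) (e : I ⟶ X) : Prop :=
  e ≫ f ≤ e ≫ g ∧
  (∀ {Z : C} (h : Z ⟶ X), h ≫ f ≤ h ≫ g → ∃ u : Z ⟶ I, u ≫ e = h)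

/-- `q : Y ⟶ Q` is the coinserter of the ordered pair `(u, v)`. -/
def IsCoinserterP {X Y Q : C} (u v : X ⟶ Y) (q : Y ⟶ Q) : Prop :=
  u ≫ q ≤ v ≫ q ∧
  (∀ {Z : C} (h : Y ⟶ Z), u ≫ h ≤ v ≫ h → ∃ t : Q ⟶ Z, q ≫ t = h) ∧
  (∀ {Z : C} (h h' : Q ⟶ Z), q ≫ h ≤ q ≫ h' → h ≤ h')

/-- `(c0, c1)` is the comma object (lax pullback) of the ordered pair `(f, g)`. -/
def IsCommaP {X Y Z P : C} (f : X ⟶ Z) (g : Y ⟶ Z) (c0 : P ⟶ X) (c1 : P ⟶ Y) : Prop :=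
  c0 ≫ f ≤ c1 ≫ g ∧
  (∀ {A : C} (u0 : A ⟶ X) (u1 : A ⟶ Y), u0 ≫ f ≤ u1 ≫ g →
      ∃ w : A ⟶ P, w ≫ c0 = u0 ∧ w ≫ c1 = u1) ∧
  (∀ {A : C} (w w' : A ⟶ P), w ≫ c0 ≤ w' ≫ c0 → w ≫ c1 ≤ w' ≫ c1 → w ≤ w')

/-- An effective epimorphism: a coinserter of some pair. -/
def EffectiveEpiP {Y Q : C} (q : Y ⟶ Q) : Prop :=
  ∃ (X : C) (u v : X ⟶ Y), IsCoinserterP u v q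

/-- Binary product in the `Pos`-enriched (conical) sense. -/
def IsBinProdP {X Y P : C} (p : P ⟶ X) (q : P ⟶ Y) : Prop :=
  (∀ {Z : C} (f : Z ⟶ X) (g : Z ⟶ Y), ∃ h : Z ⟶ P, h ≫ p = f ∧ h ≫ q = g) ∧
  (∀ {Z : C} (h h' : Z ⟶ P), h ≫ p ≤ h' ≫ p → h ≫ q ≤ h' ≫ q → h ≤ h')

/-- Terminal object in the `Pos`-enriched sense. -/
def IsTerminalP (T : C) : Prop :=
  ∀ X : C, ∃ f : X ⟶ T, ∀ g : X ⟶ T, g = f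

/-- Product of a (possibly infinite) family in the `Pos`-enriched sense. -/
def IsProdFamP {ι : Type w} (X : ι → C) (P : C) (p : ∀ i, P ⟶ X i) : Prop :=
  (∀ {Z : C} (f : ∀ i, Z ⟶ X i), ∃ h : Z ⟶ P, ∀ i, h ≫ p i = f i) ∧
  (∀ {Z : C} (h h' : Z ⟶ P), (∀ i, h ≫ p i ≤ h' ≫ p i) → h ≤ h')

/-- Weak product of a family: only the existence part. -/
def IsWeakProdFam {ι : Type w} (X : ι → C) (P : C) (p : ∀ i, P ⟶ X i) : Prop :=
  ∀ {Z : C} (f : ∀ i, Z ⟶ X i), ∃ h : Z ⟶ P, ∀ i, h ≫ p i = f i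

/-- Pullback in the `Pos`-enriched (conical) sense. -/
def IsPullbackP {X Y Z P : C} (f : X ⟶ Z) (g : Y ⟶ Z) (p0 : P ⟶ X) (p1 : P ⟶ Y) : Prop :=
  p0 ≫ f = p1 ≫ g ∧
  (∀ {A : C} (u0 : A ⟶ X) (u1 : A ⟶ Y), u0 ≫ f = u1 ≫ g →
      ∃ w : A ⟶ P, w ≫ p0 = u0 ∧ w ≫ p1 = u1) ∧
  (∀ {A : C} (w w' : A ⟶ P), w ≫ p0 ≤ w' ≫ p0 → w ≫ p1 ≤ w' ≫ p1 → w ≤ w')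

/-- A congruence, given by a jointly order-monic pair which is order-reflexive and
transitive (in terms of generalized elements). -/
def IsCongPair {S X : C} (s0 s1 : S ⟶ X) : Prop :=
  (∀ {A : C} (u v : A ⟶ S), u ≫ s0 ≤ v ≫ s0 → u ≫ s1 ≤ v ≫ s1 → u ≤ v) ∧
  (∀ {A : C} (a0 a1 : A ⟶ X), a0 ≤ a1 → ∃ u : A ⟶ S, u ≫ s0 = a0 ∧ u ≫ s1 = a1) ∧
  (∀ {A : C} (u v : A ⟶ S), u ≫ s1 = v ≫ s0 →
      ∃ t : A ⟶ S, t ≫ s0 = u ≫ s0 ∧ t ≫ s1 = v ≫ s1)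

/-- An so-projective object: its covariant hom-functor to `Pos` preserves so-morphisms
(equivalently, sends them to surjections). -/
def SoProjective (P : C) : Prop :=
  ∀ {A B : C} (e : A ⟶ B), IsSo e → ∀ f : P ⟶ B, ∃ g : P ⟶ A, g ≫ e = f

end PosEnr

/-- A weight `W : D ⥤ Pos` for `Pos`-enriched weighted limits, given concretely. -/
structure PosWeight (D : Type u') [Category.{v'} D] [PosEnriched D] where
  obj : D → Type
  po : ∀ d, PartialOrder (obj d)
  map : ∀ {d d' : D}, (d ⟶ d') → obj d → obj d'
  map_monotone : ∀ {d d' : D} (f : d ⟶ d') (x y : obj d),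
    (po d).le x y → (po d').le (map f x) (map f y)
  map_id : ∀ (d : D) (x : obj d), map (𝟙 d) x = x
  map_comp : ∀ {d d' d'' : D} (f : d ⟶ d') (g : d' ⟶ d'') (x : obj d),
    map (f ≫ g) x = map g (map f x)
  map_le : ∀ {d d' : D} {f g : d ⟶ d'}, f ≤ g → ∀ x : obj d, (po d').le (map f x) (map g x)

attribute [instance] PosWeight.po

/-- A finite weight: finitely many objects, finite hom-posets, finite values. -/
def PosWeight.IsFiniteWeight {D : Type u'} [Category.{v'} D] [PosEnriched D]
    (W : PosWeight D) : Prop :=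
  Finite D ∧ (∀ d d' : D, Finite (d ⟶ d')) ∧ ∀ d, Finite (W.obj d)

/-- A `Pos`-enriched (locally monotone) functor. -/
structure PosFunctor (C : Type u) (E : Type u') [Category.{v} C] [Category.{v'} E]
    [PosEnriched C] [PosEnriched E] where
  toFunctor : C ⥤ E
  map_le : ∀ {X Y : C} {f g : X ⟶ Y}, f ≤ g → toFunctor.map f ≤ toFunctor.map g

/-- Composition of `Pos`-enriched functors. -/
def PosFunctor.comp {D : Type u''} {C : Type u} {E : Type u'}
    [Category.{v''} D] [Category.{v} C] [Category.{v'} E]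
    [PosEnriched D] [PosEnriched C] [PosEnriched E]
    (G : PosFunctor D C) (F : PosFunctor C E) : PosFunctor D E where
  toFunctor := G.toFunctor ⋙ F.toFunctor
  map_le h := F.map_le (G.map_le h)

/-- A cylinder (`Pos`-natural transformation) `W ⟶ C(L, F-)`. -/
structure Cylinder {D : Type u'} [Category.{v'} D] [PosEnriched D] (W : PosWeight D)
    {E : Type u} [Category.{v} E] [PosEnriched E] (F : PosFunctor D E) (L : E) where
  app : ∀ d : D, W.obj d → (L ⟶ F.toFunctor.obj d)
  monotone : ∀ (d : D) (x y : W.obj d), (W.po d).le x y → app d x ≤ app d y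
  naturality : ∀ {d d' : D} (f : d ⟶ d') (x : W.obj d),
    app d x ≫ F.toFunctor.map f = app d' (W.map f x)

/-- The image of a cylinder under a `Pos`-enriched functor. -/
def Cylinder.mapF {D : Type u''} {C : Type u} {E : Type u'}
    [Category.{v''} D] [Category.{v} C] [Category.{v'} E]
    [PosEnriched D] [PosEnriched C] [PosEnriched E]
    {W : PosWeight D} {G : PosFunctor D C} {L : C}
    (F : PosFunctor C E) (c : Cylinder W G L) :
    Cylinder W (G.comp F) (F.toFunctor.obj L) where
  app d x := F.toFunctor.map (c.app d x)
  monotone d x y h := F.map_le (c.monotone d x y h)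
  naturality f x := by
    show F.toFunctor.map _ ≫ F.toFunctor.map _ = _
    rw [← F.toFunctor.map_comp, c.naturality]

/-- `L` with cylinder `c` is a weak `W`-weighted limit of `F`:
the induced comparison maps on hom-posets are surjective. -/
def IsWeakWeightedLimitP {D : Type u'} [Category.{v'} D] [PosEnriched D] (W : PosWeight D)
    {E : Type u} [Category.{v} E] [PosEnriched E] (F : PosFunctor D E)
    (L : E) (c : Cylinder W F L) : Prop :=
  ∀ (Z : E) (φ : Cylinder W F Z), ∃ h : Z ⟶ L, ∀ (d : D) (x : W.obj d),
    h ≫ c.app d x = φ.app d x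

/-- `L` with cylinder `c` is a (strong) `W`-weighted limit of `F`. -/
def IsWeightedLimitP {D : Type u'} [Category.{v'} D] [PosEnriched D] (W : PosWeight D)
    {E : Type u} [Category.{v} E] [PosEnriched E] (F : PosFunctor D E)
    (L : E) (c : Cylinder W F L) : Prop :=
  IsWeakWeightedLimitP W F L c ∧
  ∀ (Z : E) (h h' : Z ⟶ L), (∀ (d : D) (x : W.obj d), h ≫ c.app d x ≤ h' ≫ c.app d x) → h ≤ h'

/-- A weakly lex `Pos`-category: all weak finite weighted limits exist. -/
def WeaklyLex (C : Type u) [Category.{v} C] [PosEnriched C] : Prop :=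
  ∀ (D : Type) [SmallCategory D] [PosEnriched D] (W : PosWeight D) (F : PosFunctor D C),
    W.IsFiniteWeight → ∃ (L : C) (c : Cylinder W F L), IsWeakWeightedLimitP W F L c

/-- All finite weighted limits exist (in the strong sense). -/
def HasFiniteWeightedLimitsP (C : Type u) [Category.{v} C] [PosEnriched C] : Prop :=
  ∀ (D : Type) [SmallCategory D] [PosEnriched D] (W : PosWeight D) (F : PosFunctor D C),
    W.IsFiniteWeight → ∃ (L : C) (c : Cylinder W F L), IsWeightedLimitP W F L c

open PosEnr

/-- A regular `Pos`-enriched category. -/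
def IsRegularCat (C : Type u) [Category.{v} C] [PosEnriched C] : Prop :=
  HasFiniteWeightedLimitsP C ∧
  (∀ {X Y : C} (f : X ⟶ Y), ∃ (I : C) (e : X ⟶ I) (m : I ⟶ Y),
      IsSo e ∧ OrderMono m ∧ e ≫ m = f) ∧
  (∀ {X Y Z P : C} (f : X ⟶ Z) (g : Y ⟶ Z) (p0 : P ⟶ X) (p1 : P ⟶ Y),
      IsPullbackP f g p0 p1 → IsSo f → IsSo p1)

/-- An exact `Pos`-enriched category: regular, and every congruence is effective,
i.e. is the kernel congruence (comma object `q/q`) of some morphism. -/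
def IsExactCat (C : Type u) [Category.{v} C] [PosEnriched C] : Prop :=
  IsRegularCat C ∧
  ∀ {S X : C} (s0 s1 : S ⟶ X), IsCongPair s0 s1 →
    ∃ (Q : C) (q : X ⟶ Q), IsCommaP q q s0 s1

/-- Fully order-faithful: full and order-reflecting (hence faithful) on hom-posets. -/
def FullyOrderFaithful {C : Type u} {E : Type u'} [Category.{v} C] [Category.{v'} E]
    [PosEnriched C] [PosEnriched E] (F : PosFunctor C E) : Prop :=
  (∀ {X Y : C} (g : F.toFunctor.obj X ⟶ F.toFunctor.obj Y), ∃ f : X ⟶ Y, F.toFunctor.map f = g) ∧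
  (∀ {X Y : C} (f g : X ⟶ Y), F.toFunctor.map f ≤ F.toFunctor.map g → f ≤ g)

/-- An equivalence of `Pos`-enriched categories. -/
def IsEquivP {C : Type u} {E : Type u'} [Category.{v} C] [Category.{v'} E]
    [PosEnriched C] [PosEnriched E] (F : PosFunctor C E) : Prop :=
  FullyOrderFaithful F ∧ ∀ Y : E, ∃ X : C, Nonempty (F.toFunctor.obj X ≅ Y)

/-- Preservation of all finite weighted limits by a `Pos`-enriched functor. -/
def PreservesFiniteWeightedLimitsP {C : Type u} {E : Type u'} [Category.{v} C] [Category.{v'} E]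
    [PosEnriched C] [PosEnriched E] (F : PosFunctor C E) : Prop :=
  ∀ (D : Type) [SmallCategory D] [PosEnriched D] (W : PosWeight D), W.IsFiniteWeight →
    ∀ (G : PosFunctor D C) (L : C) (c : Cylinder W G L),
      IsWeightedLimitP W G L c →
      IsWeightedLimitP W (G.comp F) (F.toFunctor.obj L) (c.mapF F)

/-- A regular `Pos`-enriched functor: preserves finite weighted limits and effective
epimorphisms. -/
def IsRegularFunctor {C : Type u} {E : Type u'} [Category.{v} C] [Category.{v'} E]
    [PosEnriched C] [PosEnriched E] (F : PosFunctor C E) : Prop :=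
  PreservesFiniteWeightedLimitsP F ∧
  ∀ {X Y : C} (e : X ⟶ Y), EffectiveEpiP e → EffectiveEpiP (F.toFunctor.map e)

/-- A left covering functor: for every weak finite weighted limit in the domain, any
comparison morphism into the corresponding (strong) limit in the codomain is an
effective epimorphism. -/
def LeftCovering {C : Type u} {E : Type u'} [Category.{v} C] [Category.{v'} E]
    [PosEnriched C] [PosEnriched E] (F : PosFunctor C E) : Prop :=
  ∀ (D : Type) [SmallCategory D] [PosEnriched D] (W : PosWeight D), W.IsFiniteWeight →
    ∀ (G : PosFunctor D C) (L : C) (c : Cylinder W G L), IsWeakWeightedLimitP W G L c →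
    ∀ (L' : E) (c' : Cylinder W (G.comp F) L'), IsWeightedLimitP W (G.comp F) L' c' →
    ∀ h : F.toFunctor.obj L ⟶ L', (∀ (d : D) (x : W.obj d),
        h ≫ c'.app d x = F.toFunctor.map (c.app d x)) →
      EffectiveEpiP h

/-- The full subcategory of a `Pos`-enriched category is `Pos`-enriched. -/
instance fullSubPosEnriched {C : Type u} [Category.{v} C] [PosEnriched C] (Z : C → Prop) :
    PosEnriched (ObjectProperty.FullSubcategory Z) where
  homOrder X Y := PartialOrder.lift (fun f : X ⟶ Y => f.hom) (fun _ _ h => ObjectProperty.hom_ext _ h)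
  comp_mono h h' := PosEnriched.comp_mono h h'

/-! ## The exact completion -/

open PosEnr

/-- A pseudocongruence in a `Pos`-enriched category: an order-reflexive and transitive
parallel pair. These are the objects of the exact completion. -/
structure ExObj (C : Type u) [Category.{v} C] [PosEnriched C] where
  X : C
  R : C
  r0 : R ⟶ X
  r1 : R ⟶ X
  orefl : ∀ {A : C} (a0 a1 : A ⟶ X), a0 ≤ a1 → ∃ u : A ⟶ R, u ≫ r0 = a0 ∧ u ≫ r1 = a1
  tra : ∀ {A : C} (u v : A ⟶ R), u ≫ r1 = v ≫ r0 →
    ∃ t : A ⟶ R, t ≫ r0 = u ≫ r0 ∧ t ≫ r1 = v ≫ r1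

namespace ExObj

variable {C : Type u} [Category.{v} C] [PosEnriched C]

/-- `f : X ⟶ Y` is compatible from `(X,R)` to `(Y,S)`. -/
def Compat (A B : ExObj C) (f : A.X ⟶ B.X) : Prop :=
  ∃ fb : A.R ⟶ B.R, fb ≫ B.r0 = A.r0 ≫ f ∧ fb ≫ B.r1 = A.r1 ≫ f

/-- The preorder `f ≼ g` on compatible morphisms, given by factoring `(f,g)` through
the codomain pseudocongruence. -/
def Pre (A B : ExObj C) (f g : A.X ⟶ B.X) : Prop :=
  ∃ s : A.X ⟶ B.R, s ≫ B.r0 = f ∧ s ≫ B.r1 = g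

theorem Pre.refl (A B : ExObj C) (f : A.X ⟶ B.X) : Pre A B f f := by
  obtain ⟨u, h0, h1⟩ := B.orefl f f le_rfl
  exact ⟨u, h0, h1⟩

theorem Pre.trans' {A B : ExObj C} {f g h : A.X ⟶ B.X}
    (h1 : Pre A B f g) (h2 : Pre A B g h) : Pre A B f h := by
  obtain ⟨s, hs0, hs1⟩ := h1
  obtain ⟨t, ht0, ht1⟩ := h2
  obtain ⟨w, hw0, hw1⟩ := B.tra s t (by rw [hs1, ht0])
  exact ⟨w, by rw [hw0, hs0], by rw [hw1, ht1]⟩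

theorem Compat.comp {A B D : ExObj C} {f : A.X ⟶ B.X} {g : B.X ⟶ D.X}
    (hf : Compat A B f) (hg : Compat B D g) : Compat A D (f ≫ g) := by
  obtain ⟨fb, h0, h1⟩ := hf
  obtain ⟨gb, k0, k1⟩ := hg
  refine ⟨fb ≫ gb, ?_, ?_⟩
  · rw [Category.assoc, k0, ← Category.assoc, h0, Category.assoc]
  · rw [Category.assoc, k1, ← Category.assoc, h1, Category.assoc]

theorem Pre.comp_left {A B D : ExObj C} {f f' : A.X ⟶ B.X} (g : B.X ⟶ D.X)
    (hg : Compat B D g) (h : Pre A B f f') : Pre A D (f ≫ g) (f' ≫ g) := by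
  obtain ⟨s, hs0, hs1⟩ := h
  obtain ⟨gb, k0, k1⟩ := hg
  refine ⟨s ≫ gb, ?_, ?_⟩
  · rw [Category.assoc, k0, ← Category.assoc, hs0]
  · rw [Category.assoc, k1, ← Category.assoc, hs1]

theorem Pre.comp_right {A B D : ExObj C} (f : A.X ⟶ B.X) {g g' : B.X ⟶ D.X}
    (h : Pre B D g g') : Pre A D (f ≫ g) (f ≫ g') := by
  obtain ⟨s, hs0, hs1⟩ := h
  exact ⟨f ≫ s, by rw [Category.assoc, hs0], by rw [Category.assoc, hs1]⟩

theorem Pre.compCongr {A B D : ExObj C} {f f' : A.X ⟶ B.X} {g g' : B.X ⟶ D.X}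
    (hg : Compat B D g) (h1 : Pre A B f f') (h2 : Pre B D g g') :
    Pre A D (f ≫ g) (f' ≫ g') :=
  (Pre.comp_left g hg h1).trans' (Pre.comp_right f' h2)

/-- The equivalence relation on compatible morphisms. -/
def exSetoid (A B : ExObj C) : Setoid {f : A.X ⟶ B.X // Compat A B f} where
  r f g := Pre A B f.1 g.1 ∧ Pre A B g.1 f.1
  iseqv := ⟨fun f => ⟨Pre.refl A B f.1, Pre.refl A B f.1⟩, fun h => ⟨h.2, h.1⟩,
    fun h1 h2 => ⟨h1.1.trans' h2.1, h2.2.trans' h1.2⟩⟩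

/-- The exact completion `C_ex` as a category: objects are pseudocongruences, morphisms
are equivalence classes of compatible morphisms. -/
instance exCategory : Category (ExObj C) where
  Hom A B := Quotient (exSetoid A B)
  id A := Quotient.mk _ ⟨𝟙 A.X, ⟨𝟙 A.R, by simp, by simp⟩⟩
  comp {A B D} f g :=
    Quotient.liftOn₂ f g (fun f g => Quotient.mk _ ⟨f.1 ≫ g.1, f.2.comp g.2⟩)
      (fun a b a' b' ha hb => Quotient.sound
        ⟨Pre.compCongr b.2 ha.1 hb.1, Pre.compCongr b'.2 ha.2 hb.2⟩)
  id_comp {A B} f := Quotient.inductionOn f fun f => Quotient.sound (by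
    constructor <;> · simp only [Category.id_comp]; exact Pre.refl A B f.1)
  comp_id {A B} f := Quotient.inductionOn f fun f => Quotient.sound (by
    constructor <;> · simp only [Category.comp_id]; exact Pre.refl A B f.1)
  assoc {A B D E} f g h := Quotient.inductionOn₃ f g h fun f g h => Quotient.sound (by
    constructor <;> · simp only [Category.assoc]; exact Pre.refl A E _)

/-- The `Pos`-enrichment of the exact completion. -/
instance exPosEnriched : PosEnriched (ExObj C) where
  homOrder A B :=
    { le := fun f g => Quotient.liftOn₂ f g (fun f g => Pre A B f.1 g.1)
        (fun a b a' b' ha hb => propext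
          ⟨fun h => (ha.2.trans' h).trans' hb.1, fun h => (ha.1.trans' h).trans' hb.2⟩)
      le_refl := fun f => Quotient.inductionOn f fun f => Pre.refl A B f.1
      le_trans := fun f g h => Quotient.inductionOn₃ f g h
        (fun f g h h1 h2 => Pre.trans' h1 h2)
      le_antisymm := fun f g => Quotient.inductionOn₂ f g
        (fun f g h1 h2 => Quotient.sound ⟨h1, h2⟩) }
  comp_mono {A B D} {f f'} {g g'} h h' := by
    revert h h'
    refine Quotient.inductionOn₂ f f' (fun a a' => Quotient.inductionOn₂ g g'
      (fun b b' h h' => ?_))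
    exact Pre.compCongr b.2 h h'

end ExObj

/-! ## The canonical embedding `Γ : C → C_ex` -/

namespace ExObj

variable {C : Type u} [Category.{v} C] [PosEnriched C]

variable (I : C → C) (i0 i1 : ∀ X : C, I X ⟶ X)

/-- The pseudocongruence `(X, I_X)` associated to a chosen weak comma object `I_X` of
`(1_X, 1_X)`. -/
def commaExObj (hle : ∀ X, i0 X ≤ i1 X)
    (hfac : ∀ (X : C) {A : C} (a0 a1 : A ⟶ X), a0 ≤ a1 →
      ∃ u : A ⟶ I X, u ≫ i0 X = a0 ∧ u ≫ i1 X = a1) (X : C) : ExObj C where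
  X := X
  R := I X
  r0 := i0 X
  r1 := i1 X
  orefl a0 a1 h := hfac X a0 a1 h
  tra u v huv := by
    refine hfac X _ _ ?_
    calc u ≫ i0 X ≤ u ≫ i1 X := PosEnriched.comp_mono le_rfl (hle X)
      _ = v ≫ i0 X := huv
      _ ≤ v ≫ i1 X := PosEnriched.comp_mono le_rfl (hle X)

/-- The canonical functor `Γ : C → C_ex`, `X ↦ (X, I_X)`, `f ↦ [f]`. -/
def GammaFunc (hle : ∀ X, i0 X ≤ i1 X)
    (hfac : ∀ (X : C) {A : C} (a0 a1 : A ⟶ X), a0 ≤ a1 →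
      ∃ u : A ⟶ I X, u ≫ i0 X = a0 ∧ u ≫ i1 X = a1) : C ⥤ ExObj C where
  obj X := commaExObj I i0 i1 hle hfac X
  map {X Y} f := Quotient.mk _ ⟨f, by
    obtain ⟨u, h0, h1⟩ := hfac Y (i0 X ≫ f) (i1 X ≫ f)
      (PosEnriched.comp_mono (hle X) le_rfl)
    exact ⟨u, h0, h1⟩⟩
  map_id X := Quotient.sound (by
    constructor <;> exact Pre.refl _ _ _)
  map_comp f g := Quotient.sound (by
    constructor <;> exact Pre.refl _ _ _)

/-- The canonical quotient morphism `[1_X] : Γ X → (X, R)` in `C_ex`. -/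
def exQuot (hle : ∀ X, i0 X ≤ i1 X)
    (hfac : ∀ (X : C) {A : C} (a0 a1 : A ⟶ X), a0 ≤ a1 →
      ∃ u : A ⟶ I X, u ≫ i0 X = a0 ∧ u ≫ i1 X = a1) (A : ExObj C) :
    (GammaFunc I i0 i1 hle hfac).obj A.X ⟶ A :=
  Quotient.mk _ ⟨𝟙 A.X, by
    obtain ⟨u, h0, h1⟩ := A.orefl (i0 A.X) (i1 A.X) (hle A.X)
    exact ⟨u, by simpa [GammaFunc, commaExObj] using h0, by simpa [GammaFunc, commaExObj] using h1⟩⟩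

end ExObj

/-!
Represent the congruence by `f0 f1 : S.X ⟶ Y.X` and write `≼` for the relation of `Y`. Testing
the congruence axioms on the objects `Γ T` of `C_ex`, whose relation is the order of `C`, shows
that `x ⊑ y :⟺ ∃ s, x ≼ s f0 ∧ s f1 ≼ y` is reflexive and transitive on every `C(T, Y.X)`. Two
weak pullbacks present `⊑` by a pair `S' ⇉ Y.X`, so `(Y.X, S')` is an object of `C_ex`, and
`q = [1_Y]` into it is the coinserter of the congruence. A lax square `u₀ q ≤ u₁ q` is a witness
`s` of `u₀ ⊑ u₁`; the congruence axioms improve it to one with `s f_i` equivalent to `u_i`, and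
joint order-monicity of `(f0, f1)` makes such an `s` compatible and unique up to order.
-/

namespace PosEnr

section PairRel

variable {C : Type u} [Category.{v} C]

def PairRel {R X T : C} (r0 r1 : R ⟶ X) (x y : T ⟶ X) : Prop :=
  ∃ w : T ⟶ R, w ≫ r0 = x ∧ w ≫ r1 = y

theorem pairRel_comp {R X T : C} (r0 r1 : R ⟶ X) (w : T ⟶ R) :
    PairRel r0 r1 (w ≫ r0) (w ≫ r1) :=
  ⟨w, rfl, rfl⟩

theorem PairRel.trans_of_tra {R X T : C} {r0 r1 : R ⟶ X}
    (tra : ∀ {A : C} (u v : A ⟶ R), u ≫ r1 = v ≫ r0 →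
      ∃ t : A ⟶ R, t ≫ r0 = u ≫ r0 ∧ t ≫ r1 = v ≫ r1)
    {x y z : T ⟶ X} : PairRel r0 r1 x y → PairRel r0 r1 y z → PairRel r0 r1 x z := by
  rintro ⟨u, rfl, rfl⟩ ⟨v, hv, rfl⟩
  exact tra u v hv.symm

end PairRel

namespace IsCongPair

variable {C : Type u} [Category.{v} C] [PosEnriched C] {S X T : C} {s0 s1 : S ⟶ X}

theorem pairRel_of_le (h : IsCongPair s0 s1) {x y : T ⟶ X} (hxy : x ≤ y) :
    PairRel s0 s1 x y :=
  h.2.1 x y hxy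

theorem pairRel_trans (h : IsCongPair s0 s1) {x y z : T ⟶ X} :
    PairRel s0 s1 x y → PairRel s0 s1 y z → PairRel s0 s1 x z :=
  PairRel.trans_of_tra h.2.2

theorem pairRel_of_le_of_le (h : IsCongPair s0 s1) {x x' y' y : T ⟶ X} (hx : x ≤ x')
    (hxy : PairRel s0 s1 x' y') (hy : y' ≤ y) : PairRel s0 s1 x y :=
  h.pairRel_trans (h.pairRel_trans (h.pairRel_of_le hx) hxy) (h.pairRel_of_le hy)

end IsCongPair

end PosEnr

open Limits

/-- Every functor out of the discrete enrichment is locally monotone. -/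
abbrev discretePosEnriched (D : Type u') [Category.{v'} D] : PosEnriched D where
  homOrder _ _ :=
    { le := Eq
      le_refl := Eq.refl
      le_trans := fun _ _ _ => Eq.trans
      le_antisymm := fun _ _ h _ => h }
  comp_mono h h' := by cases h; cases h'; rfl

def PosWeight.const (D : Type u') [Category.{v'} D] [PosEnriched D] (P : Type)
    [PartialOrder P] : PosWeight D where
  obj _ := P
  po _ := inferInstance
  map _ p := p
  map_monotone _ _ _ h := h
  map_id _ _ := rfl
  map_comp _ _ _ := rfl
  map_le _ _ := le_rfl

namespace WeaklyLex

variable {C : Type u} [Category.{v} C] [PosEnriched C]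

theorem exists_weak_limit (hC : WeaklyLex C) {D : Type} [SmallCategory D] [FinCategory D]
    (F : D ⥤ C) :
    ∃ c : Cone F, ∀ s : Cone F, ∃ h : s.pt ⟶ c.pt, ∀ j, h ≫ c.π.app j = s.π.app j := by
  let _ := discretePosEnriched D
  obtain ⟨L, c, hc⟩ := hC D (PosWeight.const D PUnit) ⟨F, fun h => h ▸ le_rfl⟩
    ⟨inferInstance, fun _ _ => inferInstance, fun _ => inferInstanceAs (Finite PUnit)⟩
  refine ⟨⟨L, { app := fun j => c.app j ⟨⟩, naturality := fun _ _ f => ?_ }⟩, fun s => ?_⟩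
  · simpa [PosWeight.const] using (c.naturality f ⟨⟩).symm
  · obtain ⟨h, hh⟩ := hc s.pt
      { app := fun j _ => s.π.app j
        monotone := fun _ _ _ _ => le_rfl
        naturality := fun f _ => by simp }
    exact ⟨h, fun j => hh j ⟨⟩⟩

theorem exists_weak_pullback (hC : WeaklyLex C) {X Y Z : C} (f : X ⟶ Z) (g : Y ⟶ Z) :
    ∃ c : PullbackCone f g, ∀ {A : C} (u0 : A ⟶ X) (u1 : A ⟶ Y), u0 ≫ f = u1 ≫ g →
      ∃ h : A ⟶ c.pt, h ≫ c.fst = u0 ∧ h ≫ c.snd = u1 := by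
  obtain ⟨c, hc⟩ := hC.exists_weak_limit (cospan f g)
  exact ⟨c, fun u0 u1 hu => (hc (PullbackCone.mk u0 u1 hu)).imp fun h hh => ⟨hh _, hh _⟩⟩

/-- Weak cotensors `P ⋔ T` with finite posets. -/
theorem exists_weak_cotensor (hC : WeaklyLex C) (P : Type) [PartialOrder P] [Finite P]
    (T : C) : ∃ (L : C) (c : P → (L ⟶ T)), Monotone c ∧
      ∀ {Z : C} (φ : P → (Z ⟶ T)), Monotone φ → ∃ h : Z ⟶ L, ∀ p, h ≫ c p = φ p := by
  let _ := discretePosEnriched (Discrete PUnit)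
  obtain ⟨L, c, hc⟩ := hC (Discrete PUnit) (PosWeight.const _ P)
    ⟨(Functor.const _).obj T, fun h => h ▸ le_rfl⟩
    ⟨inferInstance, fun _ _ => inferInstance, fun _ => inferInstanceAs (Finite P)⟩
  refine ⟨L, c.app ⟨⟨⟩⟩, fun p q h => c.monotone _ p q h, fun {Z} φ hφ => ?_⟩
  obtain ⟨h, hh⟩ := hc Z
    { app := fun _ => φ
      monotone := fun _ _ _ h => hφ h
      naturality := fun _ _ => by simp [PosWeight.const] }
  exact ⟨h, hh _⟩

/-- Weak comma objects `1_T / 1_T`, i.e. weak cotensors `2 ⋔ T`. -/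
theorem exists_weak_comma_id (hC : WeaklyLex C) (T : C) :
    ∃ (J : C) (j0 j1 : J ⟶ T), j0 ≤ j1 ∧
      ∀ {A : C} (a0 a1 : A ⟶ T), a0 ≤ a1 → PairRel j0 j1 a0 a1 := by
  obtain ⟨L, c, hc, hfac⟩ := hC.exists_weak_cotensor Bool T
  refine ⟨L, c false, c true, hc (Bool.false_le true), fun a0 a1 h => ?_⟩
  obtain ⟨u, hu⟩ := hfac (fun b => cond b a1 a0) (by
    rintro (_ | _) (_ | _) hb
    exacts [le_rfl, h, absurd hb (by decide), le_rfl])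
  exact ⟨u, hu false, hu true⟩

theorem exists_pairRel_iff_comp {A B X : C} (hC : WeaklyLex C) (a0 a1 : A ⟶ X) (b0 b1 : B ⟶ X) :
    ∃ (P : C) (p0 p1 : P ⟶ X), ∀ {T : C} (x z : T ⟶ X),
      PairRel p0 p1 x z ↔ ∃ y, PairRel a0 a1 x y ∧ PairRel b0 b1 y z := by
  obtain ⟨c, hc⟩ := hC.exists_weak_pullback a1 b0
  refine ⟨c.pt, c.fst ≫ a0, c.snd ≫ b1, fun x z => ⟨?_, ?_⟩⟩
  · rintro ⟨w, rfl, rfl⟩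
    exact ⟨w ≫ c.fst ≫ a1, ⟨w ≫ c.fst, by simp, by simp⟩,
      ⟨w ≫ c.snd, by simp [c.condition], by simp⟩⟩
  · rintro ⟨y, ⟨u, rfl, rfl⟩, ⟨v, hv, rfl⟩⟩
    obtain ⟨h, hfst, hsnd⟩ := hc u v hv.symm
    exact ⟨h, by simp [reassoc_of% hfst], by simp [reassoc_of% hsnd]⟩

end WeaklyLex

namespace ExObj

variable {C : Type u} [Category.{v} C] [PosEnriched C]

def Rel (B : ExObj C) {T : C} (x y : T ⟶ B.X) : Prop :=
  PairRel B.r0 B.r1 x y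

section Rel

variable {B : ExObj C} {T : C} {x y z : T ⟶ B.X}

theorem rel_of_le (h : x ≤ y) : B.Rel x y :=
  B.orefl x y h

theorem Rel.refl (x : T ⟶ B.X) : B.Rel x x :=
  rel_of_le le_rfl

theorem Rel.trans : B.Rel x y → B.Rel y z → B.Rel x z :=
  PairRel.trans_of_tra B.tra

theorem Rel.precomp {T' : C} (t : T' ⟶ T) : B.Rel x y → B.Rel (t ≫ x) (t ≫ y) := by
  rintro ⟨w, rfl, rfl⟩
  exact ⟨t ≫ w, by simp, by simp⟩

theorem rel_r0_r1 (B : ExObj C) : B.Rel B.r0 B.r1 :=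
  ⟨𝟙 _, Category.id_comp _, Category.id_comp _⟩

end Rel

section Hom

variable {A B D : ExObj C}

theorem compat_iff_rel {f : A.X ⟶ B.X} : Compat A B f ↔ B.Rel (A.r0 ≫ f) (A.r1 ≫ f) :=
  Iff.rfl

theorem Compat.rel {f : A.X ⟶ B.X} (hf : Compat A B f) {T : C} {x y : T ⟶ A.X}
    (h : A.Rel x y) : B.Rel (x ≫ f) (y ≫ f) := by
  obtain ⟨w, rfl, rfl⟩ := h
  simpa using (compat_iff_rel.1 hf).precomp w

theorem compat_of_r0_le_r1 (h : A.r0 ≤ A.r1) (f : A.X ⟶ B.X) : Compat A B f :=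
  rel_of_le (comp_mono' h le_rfl)

/-- The morphism `[f] : A ⟶ B` of `C_ex`. -/
def homMk (f : A.X ⟶ B.X) (hf : Compat A B f) : A ⟶ B :=
  Quotient.mk (exSetoid A B) ⟨f, hf⟩

theorem exists_eq_homMk (φ : A ⟶ B) : ∃ f hf, φ = homMk f hf :=
  Quotient.inductionOn φ fun f => ⟨f.1, f.2, rfl⟩

theorem homMk_comp_homMk {f : A.X ⟶ B.X} {g : B.X ⟶ D.X} (hf : Compat A B f)
    (hg : Compat B D g) : homMk f hf ≫ homMk g hg = homMk (f ≫ g) (hf.comp hg) :=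
  rfl

theorem homMk_le_homMk_iff {f g : A.X ⟶ B.X} {hf : Compat A B f} {hg : Compat A B g} :
    homMk f hf ≤ homMk g hg ↔ B.Rel f g :=
  Iff.rfl

theorem homMk_eq_homMk_iff {f g : A.X ⟶ B.X} {hf : Compat A B f} {hg : Compat A B g} :
    homMk f hf = homMk g hg ↔ B.Rel f g ∧ B.Rel g f :=
  Quotient.eq

end Hom

/-- The relation `R ∘ (f0, f1) ∘ R` on `Y.X`; it presents the codomain `(Y.X, S')` of the
coinserter. -/
def QuotRel (Y : ExObj C) {S : C} (f0 f1 : S ⟶ Y.X) {T : C} (x y : T ⟶ Y.X) : Prop :=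
  ∃ s : T ⟶ S, Y.Rel x (s ≫ f0) ∧ Y.Rel (s ≫ f1) y

theorem quotRel_self (Y : ExObj C) {S : C} (f0 f1 : S ⟶ Y.X) : Y.QuotRel f0 f1 f0 f1 :=
  ⟨𝟙 S, by simpa using Rel.refl f0, by simpa using Rel.refl f1⟩

theorem QuotRel.rel_comp {Y Z : ExObj C} {S T : C} {f0 f1 : S ⟶ Y.X} {m : Y.X ⟶ Z.X}
    (hm : Compat Y Z m) (hfm : Z.Rel (f0 ≫ m) (f1 ≫ m)) {x y : T ⟶ Y.X}
    (hxy : Y.QuotRel f0 f1 x y) : Z.Rel (x ≫ m) (y ≫ m) := by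
  obtain ⟨s, hxs, hsy⟩ := hxy
  have hs : Z.Rel ((s ≫ f0) ≫ m) ((s ≫ f1) ≫ m) := by simpa using hfm.precomp s
  exact ((hm.rel hxs).trans hs).trans (hm.rel hsy)

/-- The congruence axioms for `([f0], [f1]) : S ⇉ Y` in `C_ex`, read off in `C`. -/
structure IsCong (S Y : ExObj C) (f0 f1 : S.X ⟶ Y.X) : Prop where
  quotRel_refl : ∀ {T : C} (x : T ⟶ Y.X), Y.QuotRel f0 f1 x x
  quotRel_trans : ∀ {T : C} {x y z : T ⟶ Y.X},
    Y.QuotRel f0 f1 x y → Y.QuotRel f0 f1 y z → Y.QuotRel f0 f1 x z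
  exists_of_quotRel : ∀ {T : C} {x y : T ⟶ Y.X}, Y.QuotRel f0 f1 x y →
    ∃ s : T ⟶ S.X, (Y.Rel (s ≫ f0) x ∧ Y.Rel x (s ≫ f0)) ∧ (Y.Rel (s ≫ f1) y ∧ Y.Rel y (s ≫ f1))
  rel_of_rel_comp : ∀ {T : C} (t t' : T ⟶ S.X),
    Y.Rel (t ≫ f0) (t' ≫ f0) → Y.Rel (t ≫ f1) (t' ≫ f1) → S.Rel t t'

section Translation

variable {S Y G : ExObj C} {f0 f1 : S.X ⟶ Y.X} {hf0 : Compat S Y f0} {hf1 : Compat S Y f1}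

theorem pairRel_homMk_of_quotRel (hcong : IsCongPair (homMk f0 hf0) (homMk f1 hf1))
    (hG : G.r0 ≤ G.r1) {x y : G.X ⟶ Y.X} (hxy : Y.QuotRel f0 f1 x y) :
    PairRel (homMk f0 hf0) (homMk f1 hf1)
      (homMk x (compat_of_r0_le_r1 hG x)) (homMk y (compat_of_r0_le_r1 hG y)) := by
  obtain ⟨s, hxs, hsy⟩ := hxy
  let σ : G ⟶ S := homMk s (compat_of_r0_le_r1 hG s)
  exact hcong.pairRel_of_le_of_le (x' := σ ≫ homMk f0 hf0) (y' := σ ≫ homMk f1 hf1)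
    (homMk_le_homMk_iff.2 hxs) (pairRel_comp _ _ σ) (homMk_le_homMk_iff.2 hsy)

theorem exists_of_pairRel_homMk {x y : G.X ⟶ Y.X} {hx : Compat G Y x} {hy : Compat G Y y}
    (h : PairRel (homMk f0 hf0) (homMk f1 hf1) (homMk x hx) (homMk y hy)) :
    ∃ s : G.X ⟶ S.X, (Y.Rel (s ≫ f0) x ∧ Y.Rel x (s ≫ f0)) ∧
      (Y.Rel (s ≫ f1) y ∧ Y.Rel y (s ≫ f1)) := by
  obtain ⟨w, hw0, hw1⟩ := h
  obtain ⟨s, _, rfl⟩ := exists_eq_homMk w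
  rw [homMk_comp_homMk] at hw0 hw1
  exact ⟨s, homMk_eq_homMk_iff.1 hw0, homMk_eq_homMk_iff.1 hw1⟩

theorem quotRel_of_pairRel_homMk {x y : G.X ⟶ Y.X} {hx : Compat G Y x} {hy : Compat G Y y}
    (h : PairRel (homMk f0 hf0) (homMk f1 hf1) (homMk x hx) (homMk y hy)) :
    Y.QuotRel f0 f1 x y := by
  obtain ⟨s, hs0, hs1⟩ := exists_of_pairRel_homMk h
  exact ⟨s, hs0.2, hs1.1⟩

theorem _root_.PosEnr.IsCongPair.isCong (hC : WeaklyLex C)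
    (hcong : IsCongPair (homMk f0 hf0) (homMk f1 hf1)) : IsCong S Y f0 f1 := by
  choose I i0 i1 hle hfac using hC.exists_weak_comma_id
  let Γ := commaExObj I i0 i1 hle hfac
  have hΓ (T : C) : (Γ T).r0 ≤ (Γ T).r1 := hle T
  have toPair {T : C} {x y : T ⟶ Y.X} (h : Y.QuotRel f0 f1 x y) :=
    pairRel_homMk_of_quotRel hcong (hΓ T) h
  refine ⟨fun x => ?_, fun hxy hyz => ?_, fun hxy => exists_of_pairRel_homMk (toPair hxy),
    fun {T} t t' h0 h1 => ?_⟩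
  · exact quotRel_of_pairRel_homMk
      (hcong.pairRel_of_le (le_refl (homMk (A := Γ _) x (compat_of_r0_le_r1 (hΓ _) x))))
  · exact quotRel_of_pairRel_homMk (hcong.pairRel_trans (toPair hxy) (toPair hyz))
  · let τ : Γ T ⟶ S := homMk t (compat_of_r0_le_r1 (hΓ T) t)
    let τ' : Γ T ⟶ S := homMk t' (compat_of_r0_le_r1 (hΓ T) t')
    exact hcong.1 τ τ' h0 h1

end Translation

end ExObj

theorem WeaklyLex.exists_pairRel_iff_quotRel {C : Type u} [Category.{v} C] [PosEnriched C]
    (hC : WeaklyLex C) (Y : ExObj C) {S : C} (f0 f1 : S ⟶ Y.X) :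
    ∃ (L : C) (l0 l1 : L ⟶ Y.X), ∀ {T : C} (x y : T ⟶ Y.X),
      PairRel l0 l1 x y ↔ Y.QuotRel f0 f1 x y := by
  obtain ⟨P, p0, p1, hP⟩ := hC.exists_pairRel_iff_comp Y.r0 Y.r1 f0 f1
  obtain ⟨L, l0, l1, hL⟩ := hC.exists_pairRel_iff_comp p0 p1 Y.r0 Y.r1
  refine ⟨L, l0, l1, fun x y => (hL x y).trans ⟨?_, ?_⟩⟩
  · rintro ⟨n, hxn, hny⟩
    obtain ⟨m, hxm, s, rfl, rfl⟩ := (hP x n).1 hxn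
    exact ⟨s, hxm, hny⟩
  · rintro ⟨s, hxs, hsy⟩
    exact ⟨s ≫ f1, (hP _ _).2 ⟨s ≫ f0, hxs, pairRel_comp f0 f1 s⟩, hsy⟩

namespace ExObj.IsCong

variable {C : Type u} [Category.{v} C] [PosEnriched C] {S Y : ExObj C} {f0 f1 : S.X ⟶ Y.X}
  {L : C} {l0 l1 : L ⟶ Y.X}

theorem quotRel_of_rel (h : IsCong S Y f0 f1) {T : C} {x y : T ⟶ Y.X} (hxy : Y.Rel x y) :
    Y.QuotRel f0 f1 x y := by
  obtain ⟨s, hys, hsy⟩ := h.quotRel_refl y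
  exact ⟨s, hxy.trans hys, hsy⟩

/-- The object `(Y.X, S')` of `C_ex`. -/
def quotient (h : IsCong S Y f0 f1)
    (hL : ∀ {T : C} (x y : T ⟶ Y.X), PairRel l0 l1 x y ↔ Y.QuotRel f0 f1 x y) : ExObj C where
  X := Y.X
  R := L
  r0 := l0
  r1 := l1
  orefl a0 a1 ha := (hL a0 a1).2 (h.quotRel_of_rel (rel_of_le ha))
  tra u v huv := (hL _ _).2 <| h.quotRel_trans ((hL _ _).1 (pairRel_comp l0 l1 u))
    (huv ▸ (hL _ _).1 (pairRel_comp l0 l1 v))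

theorem exists_comp_eq_homMk (h : IsCong S Y f0 f1) (hf0 : Compat S Y f0)
    (hf1 : Compat S Y f1) {A : ExObj C} {a0 a1 : A.X ⟶ Y.X} (ha0 : Compat A Y a0)
    (ha1 : Compat A Y a1) (ha : Y.QuotRel f0 f1 a0 a1) :
    ∃ w : A ⟶ S, w ≫ homMk f0 hf0 = homMk a0 ha0 ∧ w ≫ homMk f1 hf1 = homMk a1 ha1 := by
  obtain ⟨s, hs0, hs1⟩ := h.exists_of_quotRel ha
  -- `s` is compatible: each `s f_i` is equivalent to the compatible `a_i`.
  have transport {a : A.X ⟶ Y.X} {f : S.X ⟶ Y.X} (ha : Compat A Y a)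
      (hs : Y.Rel (s ≫ f) a ∧ Y.Rel a (s ≫ f)) :
      Y.Rel ((A.r0 ≫ s) ≫ f) ((A.r1 ≫ s) ≫ f) := by
    simpa using ((hs.1.precomp A.r0).trans ha).trans (hs.2.precomp A.r1)
  refine ⟨homMk s (h.rel_of_rel_comp _ _ (transport ha0 hs0) (transport ha1 hs1)), ?_, ?_⟩
  · exact homMk_eq_homMk_iff.2 hs0
  · exact homMk_eq_homMk_iff.2 hs1

variable (h : IsCong S Y f0 f1)
  (hL : ∀ {T : C} (x y : T ⟶ Y.X), PairRel l0 l1 x y ↔ Y.QuotRel f0 f1 x y)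

/-- The coinserter `q = [1_Y]`. -/
def quotientMap : Y ⟶ h.quotient hL :=
  homMk (𝟙 Y.X) ((hL _ _).2 (h.quotRel_of_rel
    (by simpa using Y.rel_r0_r1 : Y.Rel (Y.r0 ≫ 𝟙 Y.X) (Y.r1 ≫ 𝟙 Y.X))))

theorem homMk_comp_quotientMap_le_iff {A : ExObj C} {a0 a1 : A.X ⟶ Y.X} {ha0 : Compat A Y a0}
    {ha1 : Compat A Y a1} :
    homMk a0 ha0 ≫ h.quotientMap hL ≤ homMk a1 ha1 ≫ h.quotientMap hL ↔
      Y.QuotRel f0 f1 a0 a1 :=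
  (hL _ _).trans (by dsimp only [quotient]; simp only [Category.comp_id])

theorem isCoinserterP_quotientMap (hf0 : Compat S Y f0) (hf1 : Compat S Y f1) :
    IsCoinserterP (homMk f0 hf0) (homMk f1 hf1) (h.quotientMap hL) := by
  refine ⟨(homMk_comp_quotientMap_le_iff h hL).2 (Y.quotRel_self f0 f1), fun {Z} φ hφ => ?_,
    fun {Z} φ ψ hφψ => ?_⟩
  · obtain ⟨m, hm, rfl⟩ := exists_eq_homMk φ
    have hm' : Compat (h.quotient hL) Z m :=
      ((hL l0 l1).1 (rel_r0_r1 (h.quotient hL))).rel_comp hm hφ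
    refine ⟨homMk m hm', homMk_eq_homMk_iff.2 ?_⟩
    dsimp only [quotient]
    simp only [Category.id_comp]
    exact ⟨Rel.refl m, Rel.refl m⟩
  · obtain ⟨a, ha, rfl⟩ := exists_eq_homMk φ
    obtain ⟨b, hb, rfl⟩ := exists_eq_homMk ψ
    have hab : Z.Rel (𝟙 (h.quotient hL).X ≫ a) (𝟙 _ ≫ b) := hφψ
    exact homMk_le_homMk_iff.2 (by simpa using hab)

theorem isCommaP_quotientMap (hf0 : Compat S Y f0) (hf1 : Compat S Y f1) :
    IsCommaP (h.quotientMap hL) (h.quotientMap hL) (homMk f0 hf0) (homMk f1 hf1) := by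
  refine ⟨(h.isCoinserterP_quotientMap hL hf0 hf1).1, fun {A} u0 u1 hu => ?_,
    fun {A} w w' hw0 hw1 => ?_⟩
  · obtain ⟨a0, ha0, rfl⟩ := exists_eq_homMk u0
    obtain ⟨a1, ha1, rfl⟩ := exists_eq_homMk u1
    exact h.exists_comp_eq_homMk hf0 hf1 ha0 ha1
      ((homMk_comp_quotientMap_le_iff h hL).1 hu)
  · obtain ⟨t, _, rfl⟩ := exists_eq_homMk w
    obtain ⟨t', _, rfl⟩ := exists_eq_homMk w'
    exact h.rel_of_rel_comp t t' hw0 hw1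

end ExObj.IsCong

open ExObj in
/-- every congruence in the exact completion is effective: it is the kernel
congruence of its coinserter. -/
theorem statement9 {C : Type u} [Category.{v} C] [PosEnriched C] (hC : WeaklyLex C)
    {S Y : ExObj C} (h0 h1 : S ⟶ Y) (hcong : PosEnr.IsCongPair h0 h1) :
    ∃ (Q : ExObj C) (q : Y ⟶ Q),
      PosEnr.IsCoinserterP h0 h1 q ∧ PosEnr.IsCommaP q q h0 h1 := by
  obtain ⟨f0, hf0, rfl⟩ := exists_eq_homMk h0
  obtain ⟨f1, hf1, rfl⟩ := exists_eq_homMk h1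
  have h := hcong.isCong hC
  obtain ⟨L, l0, l1, hL⟩ := hC.exists_pairRel_iff_quotRel Y f0 f1
  exact ⟨h.quotient hL, h.quotientMap hL, h.isCoinserterP_quotientMap hL hf0 hf1,
    h.isCommaP_quotientMap hL hf0 hf1⟩
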